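/- arXiv:1808.03373 — 2 statements merged into one kernel-verified Lean document; each statement's English description precedes it below -/
import Mathlib

section
/- Let I be a finite index set partitioned as I = R ∪ O with R ∩ O = ∅. Let x, Y, f, d : I → ℝ and p : I × I → ℝ satisfy: p_{ij} = 0 whenever j ∈ R; f_j = d_j for all j ∈ R; f_j = Σ_{i∈I} f_i p_{ij} for all j ∈ O. Define δ_j = −Y_j + Σ_{i∈I} p_{ij} Y_i + d_j·1[j ∈ R] and w_i = x_i − Σ_{j∈I} p_{ij} x_j. Then Σ_{j∈I} x_j δ_j = Σ_{i∈I} (f_i − Y_i) w_i. -/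
open Finset

/-! The external arrivals on a lane are exactly the defect `f j - ∑ i, f i * p (i, j)` of flow
conservation there, so the one-step change of the queues is `(I - Pᵀ)(f - Y)`. Pairing it with
`x` and moving `I - Pᵀ` across the pairing as `I - P` turns `x` into the pressure weights `w`. -/

theorem sum_mul_sub_sum_mul_eq_sum_mul_sub_sum_mul {I α : Type*} [Fintype I] [CommRing α]
    (x u : I → α) (p : I × I → α) :
    ∑ j, x j * (u j - ∑ i, u i * p (i, j)) = ∑ i, u i * (x i - ∑ j, p (i, j) * x j) := by
  simp only [mul_sub, sum_sub_distrib, mul_sum]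
  rw [sum_comm]
  congr 1
  · exact sum_congr rfl fun _ _ => mul_comm _ _
  · exact sum_congr rfl fun _ _ => sum_congr rfl fun _ _ => by ring

theorem externalArrival_eq_flow_sub_inflow {I : Type*} [Fintype I] [DecidableEq I]
    {R O : Finset I} (hpart : R ∪ O = univ) {f d : I → ℝ} {p : I × I → ℝ}
    (hp : ∀ i j, j ∈ R → p (i, j) = 0) (hfR : ∀ j ∈ R, f j = d j)
    (hfO : ∀ j ∈ O, f j = ∑ i, f i * p (i, j)) (j : I) :
    (if j ∈ R then d j else 0) = f j - ∑ i, f i * p (i, j) := by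
  by_cases hR : j ∈ R
  · simp [hR, hp _ _ hR, hfR j hR]
  · have hO : j ∈ O := by
      have hj : j ∈ R ∪ O := hpart ▸ mem_univ j
      simpa [hR] using hj
    simp [hR, ← hfO j hO]

theorem drift_pressure_form_general {I : Type*} [Fintype I] [DecidableEq I]
    (R O : Finset I)
    (hpart : R ∪ O = Finset.univ)
    (x Y f d : I → ℝ) (p : I × I → ℝ)
    (hp : ∀ i j, j ∈ R → p (i, j) = 0)
    (hfR : ∀ j ∈ R, f j = d j)
    (hfO : ∀ j ∈ O, f j = ∑ i, f i * p (i, j)) :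
    ∑ j, x j * (-(Y j) + (∑ i, p (i, j) * Y i) + (if j ∈ R then d j else 0))
      = ∑ i, (f i - Y i) * (x i - ∑ j, p (i, j) * x j) := by
  have hdrift : ∀ j, -(Y j) + (∑ i, p (i, j) * Y i) + (if j ∈ R then d j else 0)
      = (f j - Y j) - ∑ i, (f i - Y i) * p (i, j) := by
    intro j
    rw [externalArrival_eq_flow_sub_inflow hpart hp hfR hfO j]
    simp only [sub_mul, sum_sub_distrib, mul_comm (p _)]
    ring
  simp only [hdrift]
  exact sum_mul_sub_sum_mul_eq_sum_mul_sub_sum_mul x (fun i => f i - Y i) p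

/-- One-step drift in pressure form: the inner product of the queue vector with the
one-step queue change equals the pressure-weighted excess of steady flow over service. -/
theorem drift_pressure_form {I : Type*} [Fintype I] [DecidableEq I]
    (R O : Finset I)
    (hpart : R ∪ O = Finset.univ) (hdisj : R ∩ O = ∅)
    (x Y f d : I → ℝ) (p : I × I → ℝ)
    (hp : ∀ i j, j ∈ R → p (i, j) = 0)
    (hfR : ∀ j ∈ R, f j = d j)
    (hfO : ∀ j ∈ O, f j = ∑ i, f i * p (i, j)) :
    ∑ j, x j * (-(Y j) + (∑ i, p (i, j) * Y i) + (if j ∈ R then d j else 0))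
      = ∑ i, (f i - Y i) * (x i - ∑ j, p (i, j) * x j) :=
  drift_pressure_form_general R O hpart x Y f d p hp hfR hfO
end

section
/- Let (Ω, ℱ, μ) be a probability space with a filtration (ℱ_t)_{t∈ℕ}, and let X_t : Ω → ℝⁿ be a sequence of random vectors adapted to (ℱ_t) such that ‖X_t‖² (squared Euclidean norm) is integrable for every t. Suppose there exist ε > 0 and K ≥ 0 such that for every t, almost surely E[‖X_{t+1}‖² | ℱ_t] ≤ ‖X_t‖² − 2ε·‖X_t‖₁ + K, where ‖x‖₁ = Σ_i |x_i|. Then limsup_{T→∞} (1/T)·Σ_{t=0}^{T−1} E[‖X_t‖₁] ≤ K/(2ε); in particular there exists a finite constant bounding all Cesàro averages (1/T)·Σ_{t=0}^{T−1} E[‖X_t‖₁], i.e., the process is strongly stable. -/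
/-!
Taking expectations in the drift bound gives
`E‖X_{t+1}‖² ≤ E‖X_t‖² - 2ε E‖X_t‖₁ + K`. Telescoping over `t < T` and dropping
`E‖X_T‖² ≥ 0` yields `2ε ∑_{t<T} E‖X_t‖₁ ≤ E‖X_0‖² + T K`, so the Cesàro averages are at most
`E‖X_0‖² / (2ε T) + K / (2ε)`.
-/

open Finset Filter MeasureTheory

section Drift

variable {f g : ℕ → ℝ} {c K : ℝ}

theorem mul_sum_add_le_of_drift (h : ∀ t, f (t + 1) ≤ f t - c * g t + K) (T : ℕ) :
    c * ∑ t ∈ range T, g t + f T ≤ f 0 + T * K := by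
  induction T with
  | zero => simp
  | succ T ih =>
    rw [sum_range_succ]
    push_cast
    linarith [h T]

theorem cesaro_le_of_drift (hf : ∀ t, 0 ≤ f t) (hc : 0 < c)
    (h : ∀ t, f (t + 1) ≤ f t - c * g t + K) {T : ℕ} (hT : 0 < T) :
    (1 / (T : ℝ)) * ∑ t ∈ range T, g t ≤ f 0 / c / T + K / c := by
  have hT' : (0 : ℝ) < T := by exact_mod_cast hT
  have hsum : c * ∑ t ∈ range T, g t ≤ f 0 + T * K :=
    le_of_add_le_of_nonneg_left (mul_sum_add_le_of_drift h T) (hf T)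
  calc 1 / (T : ℝ) * ∑ t ∈ range T, g t = (c * ∑ t ∈ range T, g t) / c / T := by
        field_simp
    _ ≤ (f 0 + T * K) / c / T := by gcongr
    _ = f 0 / c / T + K / c := by field_simp

end Drift

theorem limsup_le_of_le_div_add {u : ℕ → ℝ} (hu : ∀ T, 0 ≤ u T) {A B : ℝ}
    (h : ∀ T : ℕ, 0 < T → u T ≤ A / T + B) : limsup u atTop ≤ B := by
  have hlim : Tendsto (fun T : ℕ => A / T + B) atTop (nhds B) := by
    simpa using (tendsto_const_div_atTop_nhds_zero_nat A).add_const B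
  calc limsup u atTop ≤ limsup (fun T : ℕ => A / T + B) atTop :=
        limsup_le_limsup (eventually_gt_atTop 0 |>.mono h)
          (isCoboundedUnder_le_of_le atTop hu) hlim.isBoundedUnder_le
    _ = B := hlim.limsup_eq

section Expectation

variable {Ω ι : Type*} {m m0 : MeasurableSpace Ω} {μ : Measure Ω}

theorem integrable_sum_abs_of_integrable_sum_sq [IsFiniteMeasure μ] [Fintype ι] {Y : Ω → ι → ℝ}
    (hY : ∀ i, AEStronglyMeasurable (fun ω => Y ω i) μ)
    (h : Integrable (fun ω => ∑ i, Y ω i ^ 2) μ) :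
    Integrable (fun ω => ∑ i, |Y ω i|) μ := by
  refine integrable_finsetSum _ fun i _ => (MemLp.integrable one_le_two ?_).abs
  refine (memLp_two_iff_integrable_sq (hY i)).2 (h.mono' ((hY i).pow 2) ?_)
  filter_upwards with ω
  rw [Real.norm_of_nonneg (sq_nonneg _)]
  exact single_le_sum (f := fun j => Y ω j ^ 2) (fun j _ => sq_nonneg _) (mem_univ i)

theorem integral_le_of_condExp_drift [IsProbabilityMeasure μ] (hm : m ≤ m0)
    {V V' L : Ω → ℝ} {c K : ℝ}
    (hV : Integrable V μ) (hL : Integrable L μ)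
    (h : ∀ᵐ ω ∂μ, μ[V' | m] ω ≤ V ω - c * L ω + K) :
    ∫ ω, V' ω ∂μ ≤ ∫ ω, V ω ∂μ - c * ∫ ω, L ω ∂μ + K := by
  have hrhs : Integrable (fun ω => V ω - c * L ω) μ := hV.sub (hL.const_mul c)
  calc ∫ ω, V' ω ∂μ = ∫ ω, μ[V' | m] ω ∂μ := (integral_condExp hm).symm
    _ ≤ ∫ ω, (V ω - c * L ω + K) ∂μ :=
        integral_mono_ae integrable_condExp (hrhs.add (integrable_const K)) h
    _ = _ := by
        rw [integral_add hrhs (integrable_const K), integral_sub hV (hL.const_mul c),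
          integral_const, integral_const_mul, probReal_univ, one_smul]

end Expectation

theorem foster_lyapunov_strong_stability_general
    {Ω : Type*} {m0 : MeasurableSpace Ω} (μ : Measure Ω) [IsProbabilityMeasure μ]
    (ℱ : Filtration ℕ m0) (n : ℕ) (X : ℕ → Ω → Fin n → ℝ)
    (hadapt : Adapted ℱ X)
    (hint : ∀ t, Integrable (fun ω => ∑ i, (X t ω i) ^ 2) μ)
    (ε K : ℝ) (hε : 0 < ε)
    (hdrift : ∀ t, ∀ᵐ ω ∂μ,
      (μ[fun ω' => ∑ i, (X (t + 1) ω' i) ^ 2 | ℱ t]) ω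
        ≤ ∑ i, (X t ω i) ^ 2 - 2 * ε * (∑ i, |X t ω i|) + K) :
    Filter.limsup
        (fun T : ℕ => (1 / (T : ℝ)) * ∑ t ∈ Finset.range T, ∫ ω, ∑ i, |X t ω i| ∂μ)
        Filter.atTop ≤ K / (2 * ε) ∧
      ∃ C : ℝ, ∀ T : ℕ, 1 ≤ T →
        (1 / (T : ℝ)) * ∑ t ∈ Finset.range T, ∫ ω, ∑ i, |X t ω i| ∂μ ≤ C := by
  set V : ℕ → ℝ := fun t => ∫ ω, ∑ i, (X t ω i) ^ 2 ∂μ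
  have hV : ∀ t, 0 ≤ V t := fun t => integral_nonneg fun ω => sum_nonneg fun i _ => sq_nonneg _
  have hL : ∀ t, Integrable (fun ω => ∑ i, |X t ω i|) μ := fun t =>
    integrable_sum_abs_of_integrable_sum_sq
      (fun i => ((hadapt t).mono (ℱ.le t) le_rfl).eval.aestronglyMeasurable) (hint t)
  have hstep : ∀ t, V (t + 1) ≤ V t - 2 * ε * ∫ ω, ∑ i, |X t ω i| ∂μ + K := fun t =>
    integral_le_of_condExp_drift (ℱ.le t) (hint t) (hL t) (hdrift t)
  have hcesaro {T : ℕ} (hT : 0 < T) := cesaro_le_of_drift hV (by positivity) hstep hT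
  refine ⟨limsup_le_of_le_div_add (fun T => ?_) fun _ => hcesaro, V 0 / (2 * ε) + K / (2 * ε),
    fun T hT => (hcesaro hT).trans ?_⟩
  · exact mul_nonneg (by positivity) <| sum_nonneg fun t _ =>
      integral_nonneg fun ω => sum_nonneg fun i _ => abs_nonneg _
  · gcongr ?_ + _
    exact div_le_self (div_nonneg (hV 0) (by positivity)) (Nat.one_le_cast.2 hT)

/-- Foster–Lyapunov strong-stability criterion with Lyapunov function the squared
Euclidean norm: a conditional drift bound `E[‖X_{t+1}‖² | ℱ_t] ≤ ‖X_t‖² − 2ε‖X_t‖₁ + K`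
implies that the Cesàro averages of `E[‖X_t‖₁]` have limsup at most `K/(2ε)`, and in
particular are uniformly bounded (strong stability). -/
theorem foster_lyapunov_strong_stability
    {Ω : Type*} {m0 : MeasurableSpace Ω} (μ : Measure Ω) [IsProbabilityMeasure μ]
    (ℱ : Filtration ℕ m0) (n : ℕ) (X : ℕ → Ω → Fin n → ℝ)
    (hadapt : Adapted ℱ X)
    (hint : ∀ t, Integrable (fun ω => ∑ i, (X t ω i) ^ 2) μ)
    (ε K : ℝ) (hε : 0 < ε) (hK : 0 ≤ K)
    (hdrift : ∀ t, ∀ᵐ ω ∂μ,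
      (μ[fun ω' => ∑ i, (X (t + 1) ω' i) ^ 2 | ℱ t]) ω
        ≤ ∑ i, (X t ω i) ^ 2 - 2 * ε * (∑ i, |X t ω i|) + K) :
    Filter.limsup
        (fun T : ℕ => (1 / (T : ℝ)) * ∑ t ∈ Finset.range T, ∫ ω, ∑ i, |X t ω i| ∂μ)
        Filter.atTop ≤ K / (2 * ε) ∧
      ∃ C : ℝ, ∀ T : ℕ, 1 ≤ T →
        (1 / (T : ℝ)) * ∑ t ∈ Finset.range T, ∫ ω, ∑ i, |X t ω i| ∂μ ≤ C :=
  foster_lyapunov_strong_stability_general μ ℱ n X hadapt hint ε K hε hdrift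
end
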